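/- arXiv:2505.00804 — 6 statements merged into one kernel-verified Lean document; each statement's English description precedes it below -/
import Mathlib

section
/- Let μ > 0 and σ² > 0 be real numbers. Define J_up = σ²(1 − e^{−μ} − μe^{−μ})/μ², J̃_up = σ²(1 − e^{−μ} − μe^{−μ} − (1/2)μ²e^{−μ})/μ², and J̃_low = −(1/2)e^{−μ}σ². Then max(|J̃_up|, |J̃_low|) < J_up; that is, both J̃_up < J_up and (1/2)e^{−μ}σ² < J_up hold, so the maximum absolute error bound of the variance-corrected approximation e^{−μ}(1 + σ²/2) is strictly smaller than the maximum error bound of the Jensen lower-bound approximation e^{−μ}. -/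
lemma exp_gt_quad {x : ℝ} (hx : 0 < x) : 1 + x + x ^ 2 / 2 < Real.exp x := by
  have h := Real.sum_le_exp_of_nonneg hx.le 4
  have hs : (∑ i ∈ Finset.range 4, x ^ i / i.factorial) = 1 + x + x ^ 2 / 2 + x ^ 3 / 6 := by
    simp [Finset.sum_range_succ, Nat.factorial]
  nlinarith [pow_pos hx 3]

/-- For μ > 0, σ² > 0, with
`J_up = σ²(1 − e^{−μ} − μe^{−μ})/μ²`,
`J̃_up = σ²(1 − e^{−μ} − μe^{−μ} − (1/2)μ²e^{−μ})/μ²`,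
`J̃_low = −(1/2)e^{−μ}σ²`, we have `max(|J̃_up|, |J̃_low|) < J_up`. -/
theorem stmt_0 (μ σ2 : ℝ) (hμ : 0 < μ) (hσ2 : 0 < σ2) :
    max |σ2 * (1 - Real.exp (-μ) - μ * Real.exp (-μ) - (1/2) * μ^2 * Real.exp (-μ)) / μ^2|
        |-((1/2) * Real.exp (-μ) * σ2)| <
      σ2 * (1 - Real.exp (-μ) - μ * Real.exp (-μ)) / μ^2 := by
  have he : 0 < Real.exp μ := Real.exp_pos μ
  have hq := exp_gt_quad hμ
  have hμ2 : 0 < μ ^ 2 := pow_pos hμ 2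
  have htpos : 0 < Real.exp (-μ) := Real.exp_pos _
  have hmul : Real.exp (-μ) * Real.exp μ = 1 := by
    rw [← Real.exp_add]; simp
  have hkey : 0 < 1 - Real.exp (-μ) - μ * Real.exp (-μ) - (1/2) * μ^2 * Real.exp (-μ) := by
    nlinarith [mul_pos htpos he]
  rw [max_lt_iff]
  constructor
  · rw [abs_of_pos (by positivity), div_lt_div_iff₀ hμ2 hμ2]
    nlinarith [mul_pos (mul_pos hσ2 hμ2) (mul_pos htpos hμ2)]
  · rw [abs_neg, abs_of_pos (by positivity), lt_div_iff₀ hμ2]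
    nlinarith [mul_pos hσ2 hkey]
end

section
/- Let X be a nonnegative real-valued random variable on a probability space such that X and X² are integrable, with mean μ = E[X] > 0 and variance σ² = Var(X) > 0. Then |E[e^{−X}] − e^{−μ}(1 + σ²/2)| < σ²(1 − e^{−μ} − μe^{−μ})/μ²; that is, the absolute error of the variance-corrected approximation e^{−μ}(1 + σ²/2) to the void probability E[e^{−X}] is strictly smaller than the maximum error bound σ²(1 − e^{−μ} − μe^{−μ})/μ² of the Jensen lower-bound approximation e^{−μ}. -/
open MeasureTheory ProbabilityTheory Real

/-!
Write `m = E[X]`. The gap `E[e^{-X}] - e^{-m}` is the expectation of the gap between `e^{-x}`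
and its tangent line at `m`, which is nonnegative (Jensen). Since `(e^u - 1 - u) / u²` =
`∫₀¹ (1 - t) e^{tu} dt` is nondecreasing in `u`, for `x ≥ 0` (so `u = m - x ≤ m`) this pointwise
gap is at most `(1 - e^{-m} - m e^{-m}) (x - m)² / m²`; integrating gives the Jensen bound
`B = σ² (1 - e^{-m} - m e^{-m}) / m²`. The correction `e^{-m} σ² / 2` is strictly below `B`
because `e^m > 1 + m + m² / 2`, so subtracting it from a gap in `[0, B]` lands in `(-B, B)`.
-/

lemma sq_mul_integral_one_sub_mul_exp (b : ℝ) :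
    b ^ 2 * ∫ t in (0 : ℝ)..1, (1 - t) * exp (t * b) = exp b - 1 - b := by
  rcases eq_or_ne b 0 with rfl | hb
  · simp
  have hderiv : ∀ t ∈ Set.uIcc (0 : ℝ) 1,
      HasDerivAt (fun t => (1 - t) * exp (t * b) / b + exp (t * b) / b ^ 2)
        ((1 - t) * exp (t * b)) t := by
    intro t _
    have hexp : HasDerivAt (fun t : ℝ => exp (t * b)) (exp (t * b) * b) t :=
      ((hasDerivAt_id t).mul_const b).exp.congr_deriv (by simp)
    have hlin : HasDerivAt (fun t : ℝ => 1 - t) (-1) t := (hasDerivAt_id t).const_sub 1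
    refine (((hlin.mul hexp).div_const b).add (hexp.div_const (b ^ 2))).congr_deriv ?_
    field_simp
    ring
  rw [intervalIntegral.integral_eq_sub_of_hasDerivAt hderiv
    (Continuous.intervalIntegrable (by fun_prop) _ _)]
  field_simp
  simp only [mul_zero, exp_zero]
  ring

lemma monotone_integral_one_sub_mul_exp :
    Monotone fun b : ℝ => ∫ t in (0 : ℝ)..1, (1 - t) * exp (t * b) := by
  intro u v huv
  refine intervalIntegral.integral_mono_on zero_le_one
    (Continuous.intervalIntegrable (by fun_prop) _ _)
    (Continuous.intervalIntegrable (by fun_prop) _ _) ?_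
  rintro t ⟨ht0, ht1⟩
  gcongr

lemma sq_mul_exp_sub_one_sub_le_of_le {u v : ℝ} (h : u ≤ v) :
    v ^ 2 * (exp u - 1 - u) ≤ u ^ 2 * (exp v - 1 - v) := by
  rw [← sq_mul_integral_one_sub_mul_exp u, ← sq_mul_integral_one_sub_mul_exp v]
  have := mul_le_mul_of_nonneg_left (monotone_integral_one_sub_mul_exp h)
    (mul_nonneg (sq_nonneg u) (sq_nonneg v))
  linarith

lemma exp_neg_tangent_gap_nonneg (m x : ℝ) :
    0 ≤ exp (-x) - exp (-m) + exp (-m) * (x - m) := by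
  have hsplit : exp (-x) = exp (m - x) * exp (-m) := by rw [← exp_add]; ring_nf
  have := mul_le_mul_of_nonneg_right (add_one_le_exp (m - x)) (exp_pos (-m)).le
  linarith

lemma sq_mul_exp_neg_tangent_gap_le {m x : ℝ} (hx : 0 ≤ x) :
    m ^ 2 * (exp (-x) - exp (-m) + exp (-m) * (x - m)) ≤
      (1 - exp (-m) - m * exp (-m)) * (x - m) ^ 2 := by
  have hsplit : exp (-x) = exp (m - x) * exp (-m) := by rw [← exp_add]; ring_nf
  have hone : exp m * exp (-m) = 1 := by rw [← exp_add, add_neg_cancel, exp_zero]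
  have key := mul_le_mul_of_nonneg_right
    (sq_mul_exp_sub_one_sub_le_of_le (sub_le_self m hx)) (exp_pos (-m)).le
  linear_combination key + m ^ 2 * hsplit + (x - m) ^ 2 * hone

lemma one_add_add_sq_div_two_lt_exp {x : ℝ} (hx : 0 < x) : 1 + x + x ^ 2 / 2 < exp x := by
  have htaylor := sum_le_exp_of_nonneg hx.le 4
  norm_num [Finset.sum_range_succ, Nat.factorial] at htaylor
  nlinarith [pow_pos hx 3]

lemma sq_mul_exp_neg_div_two_lt {m : ℝ} (hm : 0 < m) :
    m ^ 2 * exp (-m) / 2 < 1 - exp (-m) - m * exp (-m) := by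
  have hone : exp m * exp (-m) = 1 := by rw [← exp_add, add_neg_cancel, exp_zero]
  have := mul_lt_mul_of_pos_right (one_add_add_sq_div_two_lt_exp hm) (exp_pos (-m))
  linarith

section JensenGap

variable {Ω : Type*} [MeasurableSpace Ω] {P : Measure Ω} {X : Ω → ℝ}

lemma integrable_exp_neg_of_nonneg [IsFiniteMeasure P] (hXm : AEStronglyMeasurable X P)
    (hX : ∀ᵐ ω ∂P, 0 ≤ X ω) : Integrable (fun ω => exp (-X ω)) P := by
  refine Integrable.of_bound (by fun_prop) 1 ?_
  filter_upwards [hX] with ω hω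
  rw [norm_of_nonneg (exp_pos _).le, exp_le_one_iff]
  linarith

variable [IsProbabilityMeasure P]

lemma integral_exp_neg_tangent_gap (hX : Integrable X P)
    (hexp : Integrable (fun ω => exp (-X ω)) P) :
    ∫ ω, (exp (-X ω) - exp (-∫ ω, X ω ∂P) + exp (-∫ ω, X ω ∂P) * (X ω - ∫ ω, X ω ∂P)) ∂P =
      (∫ ω, exp (-X ω) ∂P) - exp (-∫ ω, X ω ∂P) := by
  set m := ∫ ω, X ω ∂P
  have hshift : Integrable (fun ω => exp (-X ω) - exp (-m)) P := hexp.sub (integrable_const _)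
  have hlin : Integrable (fun ω => exp (-m) * (X ω - m)) P :=
    (hX.sub (integrable_const _)).const_mul _
  rw [integral_add hshift hlin, integral_sub hexp (integrable_const _), integral_const_mul,
    integral_sub hX (integrable_const _)]
  simp [m]

lemma exp_neg_integral_le_integral_exp_neg (hX : Integrable X P)
    (hexp : Integrable (fun ω => exp (-X ω)) P) :
    exp (-∫ ω, X ω ∂P) ≤ ∫ ω, exp (-X ω) ∂P := by
  rw [← sub_nonneg, ← integral_exp_neg_tangent_gap hX hexp]
  exact integral_nonneg fun ω => exp_neg_tangent_gap_nonneg _ (X ω)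

lemma sq_integral_mul_sub_exp_neg_le (hX : MemLp X 2 P) (hXnn : ∀ᵐ ω ∂P, 0 ≤ X ω) :
    (∫ ω, X ω ∂P) ^ 2 * ((∫ ω, exp (-X ω) ∂P) - exp (-∫ ω, X ω ∂P)) ≤
      (1 - exp (-∫ ω, X ω ∂P) - (∫ ω, X ω ∂P) * exp (-∫ ω, X ω ∂P)) * variance X P := by
  set m := ∫ ω, X ω ∂P
  have hX1 := hX.integrable one_le_two
  have hexp := integrable_exp_neg_of_nonneg hX.aestronglyMeasurable hXnn
  rw [← integral_exp_neg_tangent_gap hX1 hexp,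
    variance_eq_integral hX.aestronglyMeasurable.aemeasurable, ← integral_const_mul,
    ← integral_const_mul]
  refine integral_mono_ae (((hexp.sub (integrable_const _)).add
    ((hX1.sub (integrable_const _)).const_mul _)).const_mul _)
    ((hX.sub (memLp_const m)).integrable_sq.const_mul _) ?_
  filter_upwards [hXnn] with ω hω
  exact sq_mul_exp_neg_tangent_gap_le hω

end JensenGap

/-- for a nonnegative integrable random variable X with integrable square,
mean μ > 0 and variance σ² > 0, the absolute error of the variance-corrected
approximation e^{−μ}(1 + σ²/2) to E[e^{−X}] is strictly smaller than
σ²(1 − e^{−μ} − μe^{−μ})/μ². -/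
theorem stmt_1 {Ω : Type*} [MeasurableSpace Ω] (P : Measure Ω) [IsProbabilityMeasure P]
    (X : Ω → ℝ) (hXnn : ∀ ω, 0 ≤ X ω)
    (hX1 : Integrable X P) (hX2 : Integrable (fun ω => X ω ^ 2) P)
    (hmean : 0 < ∫ ω, X ω ∂P) (hvar : 0 < variance X P) :
    |(∫ ω, Real.exp (-X ω) ∂P) -
        Real.exp (-(∫ ω, X ω ∂P)) * (1 + variance X P / 2)| <
      variance X P *
        (1 - Real.exp (-(∫ ω, X ω ∂P)) -
          (∫ ω, X ω ∂P) * Real.exp (-(∫ ω, X ω ∂P))) / (∫ ω, X ω ∂P)^2 := by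
  have hX : MemLp X 2 P := (memLp_two_iff_integrable_sq hX1.aestronglyMeasurable).2 hX2
  have hjensen := exp_neg_integral_le_integral_exp_neg hX1
    (integrable_exp_neg_of_nonneg hX1.aestronglyMeasurable (ae_of_all _ hXnn))
  have hgap := sq_integral_mul_sub_exp_neg_le hX (ae_of_all _ hXnn)
  have hcorr := sq_mul_exp_neg_div_two_lt hmean
  set m := ∫ ω, X ω ∂P
  set v := variance X P
  have hm2 : 0 < m ^ 2 := by positivity
  have hcorr_lt : exp (-m) * v / 2 < v * (1 - exp (-m) - m * exp (-m)) / m ^ 2 := by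
    rw [lt_div_iff₀ hm2]
    nlinarith [mul_lt_mul_of_pos_left hcorr hvar]
  have hgap_le : (∫ ω, exp (-X ω) ∂P) - exp (-m) ≤ v * (1 - exp (-m) - m * exp (-m)) / m ^ 2 := by
    rw [le_div_iff₀ hm2]
    linarith
  have hcorr_pos : 0 < exp (-m) * v / 2 := by positivity
  rw [abs_lt]
  constructor <;> linarith
end

section
/- Let X be a nonnegative real-valued random variable on a probability space such that X and X² are integrable, with mean μ = E[X] > 0 and variance σ² = Var(X). Then the Jensen gap J = E[e^{−X}] − e^{−μ} satisfies 0 ≤ J ≤ σ²(1 − e^{−μ} − μe^{−μ})/μ². -/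
/-!
Jensen's inequality gives `J ≥ 0`. For the upper bound, on `[0, ∞)` the function `e^{-x}` lies
below the parabola that is tangent to it at `μ` and passes through `(0, 1)`: after the
substitution `y = μ - x` this is the monotonicity in `y` of
`(e^y - 1 - y) / y² = ∫₀¹ (1 - s) e^{sy} ds`. The expectation of that parabola evaluated at `X`
is `e^{-μ}` plus its leading coefficient times `Var X`.
-/

open MeasureTheory ProbabilityTheory Real

theorem exp_sub_one_sub_eq_sq_mul_integral (y : ℝ) :
    exp y - 1 - y = y ^ 2 * ∫ s in (0 : ℝ)..1, (1 - s) * exp (s * y) := by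
  have hderiv : ∀ s ∈ Set.uIcc (0 : ℝ) 1,
      HasDerivAt (fun s => (1 - s) * y * exp (s * y) + exp (s * y))
        (y ^ 2 * ((1 - s) * exp (s * y))) s := by
    intro s _
    have he : HasDerivAt (fun s => exp (s * y)) (exp (s * y) * y) s :=
      ((hasDerivAt_id s).mul_const y).exp.congr_deriv (by simp)
    have hl : HasDerivAt (fun s : ℝ => (1 - s) * y) (-y) s := by
      simpa using ((hasDerivAt_id s).const_sub 1).mul_const y
    exact ((hl.mul he).add he).congr_deriv (by ring)
  rw [← intervalIntegral.integral_const_mul, intervalIntegral.integral_eq_sub_of_hasDerivAt hderiv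
    (by apply Continuous.intervalIntegrable; fun_prop)]
  simp only [sub_self, zero_mul, one_mul, zero_add, sub_zero, exp_zero, mul_one]
  ring

theorem exp_sub_one_sub_mul_sq_le {y m : ℝ} (hy : y ≤ m) :
    (exp y - 1 - y) * m ^ 2 ≤ (exp m - 1 - m) * y ^ 2 := by
  have hmono : ∫ s in (0 : ℝ)..1, (1 - s) * exp (s * y) ≤
      ∫ s in (0 : ℝ)..1, (1 - s) * exp (s * m) := by
    refine intervalIntegral.integral_mono_on zero_le_one ?_ ?_ fun s hs => ?_
    · apply Continuous.intervalIntegrable; fun_prop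
    · apply Continuous.intervalIntegrable; fun_prop
    · gcongr
      · linarith [hs.2]
      · exact hs.1
  rw [exp_sub_one_sub_eq_sq_mul_integral y, exp_sub_one_sub_eq_sq_mul_integral m]
  have := mul_le_mul_of_nonneg_left hmono (by positivity : (0:ℝ) ≤ y ^ 2 * m ^ 2)
  linarith

theorem exp_neg_sub_tangent_mul_sq_le {x m : ℝ} (hx : 0 ≤ x) :
    (exp (-x) - (exp (-m) - exp (-m) * (x - m))) * m ^ 2 ≤
      (1 - exp (-m) - m * exp (-m)) * (x - m) ^ 2 := by
  have h := mul_le_mul_of_nonneg_left (exp_sub_one_sub_mul_sq_le (by linarith : m - x ≤ m))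
    (exp_pos (-m)).le
  have hx' : exp (-m) * exp (m - x) = exp (-x) := by rw [← exp_add]; ring_nf
  have hm' : exp (-m) * exp m = 1 := by rw [← exp_add]; simp
  linear_combination h - m ^ 2 * hx' + (x - m) ^ 2 * hm'

section
variable {Ω : Type*} [MeasurableSpace Ω] {P : Measure Ω} [IsProbabilityMeasure P] {X : Ω → ℝ}

theorem integrable_quadratic_sub_mean (hX : MemLp X 2 P) (a b c : ℝ) :
    Integrable (fun ω => a + b * (X ω - P[X]) + c * (X ω - P[X]) ^ 2) P := by
  have hc : MemLp (fun ω => X ω - P[X]) 2 P := hX.sub (memLp_const _)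
  exact ((integrable_const a).add ((hc.integrable one_le_two).const_mul b)).add
    (hc.integrable_sq.const_mul c)

theorem integral_quadratic_sub_mean (hX : MemLp X 2 P) (a b c : ℝ) :
    ∫ ω, (a + b * (X ω - P[X]) + c * (X ω - P[X]) ^ 2) ∂P = a + c * variance X P := by
  have hc : MemLp (fun ω => X ω - P[X]) 2 P := hX.sub (memLp_const _)
  have hc1 := hc.integrable one_le_two
  rw [integral_add (f := fun ω => a + b * (X ω - P[X]))
      ((integrable_const a).add (hc1.const_mul b)) (hc.integrable_sq.const_mul c),
    integral_add (integrable_const a) (hc1.const_mul b), integral_const_mul, integral_const_mul,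
    integral_sub (hX.integrable one_le_two) (integrable_const _), integral_const, integral_const,
    variance_eq_integral hX.aestronglyMeasurable.aemeasurable]
  simp

end

/-- the Jensen gap J = E[e^{−X}] − e^{−μ} satisfies
0 ≤ J ≤ σ²(1 − e^{−μ} − μe^{−μ})/μ². -/
theorem stmt_2 {Ω : Type*} [MeasurableSpace Ω] (P : Measure Ω) [IsProbabilityMeasure P]
    (X : Ω → ℝ) (hXnn : ∀ ω, 0 ≤ X ω)
    (hX1 : Integrable X P) (hX2 : Integrable (fun ω => X ω ^ 2) P)
    (hmean : 0 < ∫ ω, X ω ∂P) :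
    0 ≤ (∫ ω, Real.exp (-X ω) ∂P) - Real.exp (-(∫ ω, X ω ∂P)) ∧
      (∫ ω, Real.exp (-X ω) ∂P) - Real.exp (-(∫ ω, X ω ∂P)) ≤
        variance X P *
          (1 - Real.exp (-(∫ ω, X ω ∂P)) -
            (∫ ω, X ω ∂P) * Real.exp (-(∫ ω, X ω ∂P))) / (∫ ω, X ω ∂P)^2 := by
  set μ := ∫ ω, X ω ∂P
  have hX : MemLp X 2 P := (memLp_two_iff_integrable_sq hX1.aestronglyMeasurable).2 hX2
  have hexp : Integrable (fun ω => exp (-X ω)) P :=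
    .of_bound (by fun_prop) 1 (.of_forall fun ω => by
      simpa [abs_of_pos (exp_pos _)] using hXnn ω)
  constructor
  · have hconv : ConvexOn ℝ Set.univ (fun x : ℝ => exp (-x)) :=
      convexOn_exp.comp_linearMap (-LinearMap.id)
    exact sub_nonneg.2 <| hconv.map_integral_le (by fun_prop) isClosed_univ
      (.of_forall fun _ => Set.mem_univ _) hX1 hexp
  · have hpt : ∀ ω, exp (-X ω) ≤ exp (-μ) + -exp (-μ) * (X ω - μ) +
        (1 - exp (-μ) - μ * exp (-μ)) / μ ^ 2 * (X ω - μ) ^ 2 := fun ω => by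
      have key : exp (-X ω) - (exp (-μ) - exp (-μ) * (X ω - μ)) ≤
          (1 - exp (-μ) - μ * exp (-μ)) / μ ^ 2 * (X ω - μ) ^ 2 := by
        rw [div_mul_eq_mul_div, le_div_iff₀ (by positivity)]
        exact exp_neg_sub_tangent_mul_sq_le (hXnn ω)
      linarith
    have hint := integral_mono hexp (integrable_quadratic_sub_mean hX _ _ _) hpt
    rw [integral_quadratic_sub_mean hX] at hint
    linarith [mul_div_assoc' (variance X P) (1 - exp (-μ) - μ * exp (-μ)) (μ ^ 2)]
end

section
/- Let X be a nonnegative real-valued random variable on a probability space such that X and X² are integrable, with mean μ = E[X] > 0 and variance σ² = Var(X). Then the error J̃ = E[e^{−X}] − e^{−μ}(1 + σ²/2) of the variance-corrected approximation satisfies −(1/2)e^{−μ}σ² ≤ J̃ ≤ σ²(1 − e^{−μ} − μe^{−μ} − (1/2)μ²e^{−μ})/μ². -/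
/-! Expanding `exp (-x)` around the mean `m`, the tangent line at `m` lies below `exp (-x)`
(Jensen), which gives the lower bound. For the upper bound, `exp (-x)` lies below the tangent line
plus `c (x - m) ^ 2`, with `c` chosen so that equality holds at `x = 0`: after the substitution
`v = m - x` this is the monotonicity of `(exp v - 1 - v) / v ^ 2`, which on `v ≥ 0` is read off
from the exponential series (all coefficients positive) and which is at most `1 / 2` on `v ≤ 0`.
Taking expectations, the linear term vanishes and the quadratic one becomes `c σ²`. -/

open MeasureTheory ProbabilityTheory Real

lemma hasSum_exp_sub_one_sub (x : ℝ) :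
    HasSum (fun n : ℕ => x ^ (n + 2) / (n + 2).factorial) (exp x - 1 - x) := by
  have h := Real.exp_eq_exp_ℝ ▸ NormedSpace.expSeries_div_hasSum_exp x
  simpa [Finset.sum_range_succ, sub_sub] using (hasSum_nat_add_iff' 2).2 h

lemma exp_sub_one_sub_mul_sq_le_of_nonneg {v m : ℝ} (hv : 0 ≤ v) (hvm : v ≤ m) :
    (exp v - 1 - v) * m ^ 2 ≤ (exp m - 1 - m) * v ^ 2 := by
  refine hasSum_le (fun n => ?_) ((hasSum_exp_sub_one_sub v).mul_right _)
    ((hasSum_exp_sub_one_sub m).mul_right _)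
  have : v ^ n ≤ m ^ n := pow_le_pow_left₀ hv hvm n
  rw [div_mul_eq_mul_div, div_mul_eq_mul_div]
  gcongr ?_ / _
  calc v ^ (n + 2) * m ^ 2 = v ^ n * (m ^ 2 * v ^ 2) := by ring
    _ ≤ m ^ n * (m ^ 2 * v ^ 2) := by gcongr
    _ = m ^ (n + 2) * v ^ 2 := by ring

lemma exp_sub_one_sub_le_half_sq_of_nonpos {v : ℝ} (hv : v ≤ 0) :
    exp v - 1 - v ≤ v ^ 2 / 2 := by
  have hquad := quadratic_le_exp_of_nonneg (neg_nonneg.2 hv)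
  have hprod : exp v * exp (-v) = 1 := by rw [← exp_add, add_neg_cancel, exp_zero]
  nlinarith [exp_pos v, sq_nonneg (v ^ 2)]

lemma exp_sub_one_sub_le_mul_sq {v m : ℝ} (hm : 0 < m) (hvm : v ≤ m) :
    exp v - 1 - v ≤ (exp m - 1 - m) / m ^ 2 * v ^ 2 := by
  rcases le_total 0 v with hv | hv
  · rw [div_mul_eq_mul_div, le_div_iff₀ (by positivity)]
    exact exp_sub_one_sub_mul_sq_le_of_nonneg hv hvm
  · have : 1 / 2 ≤ (exp m - 1 - m) / m ^ 2 := by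
      rw [le_div_iff₀ (by positivity)]
      linarith [quadratic_le_exp_of_nonneg hm.le]
    calc exp v - 1 - v ≤ 1 / 2 * v ^ 2 := by linarith [exp_sub_one_sub_le_half_sq_of_nonpos hv]
      _ ≤ _ := by gcongr

lemma exp_neg_le_tangent_add_mul_sq {x m : ℝ} (hm : 0 < m) (hx : 0 ≤ x) :
    exp (-x) ≤
      exp (-m) + -exp (-m) * (x - m) + exp (-m) * ((exp m - 1 - m) / m ^ 2) * (x - m) ^ 2 := by
  have h := exp_sub_one_sub_le_mul_sq hm (show m - x ≤ m by linarith)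
  have hsplit : exp (-x) = exp (-m) * exp (m - x) := by rw [← exp_add]; ring_nf
  rw [hsplit]
  linear_combination mul_le_mul_of_nonneg_left h (exp_pos (-m)).le

section Probability

variable {Ω : Type*} [MeasurableSpace Ω] {P : Measure Ω} [IsProbabilityMeasure P]
  {X Y : Ω → ℝ}

lemma integral_le_add_mul_variance {a b c : ℝ} (hX : MemLp X 2 P) (hY : Integrable Y P)
    (hYX : ∀ ω, Y ω ≤ a + b * (X ω - P[X]) + c * (X ω - P[X]) ^ 2) :
    P[Y] ≤ a + c * variance X P := by
  have hcentered : MemLp (fun ω => X ω - P[X]) 2 P := hX.sub (memLp_const _)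
  have hlin : Integrable (fun ω => a + b * (X ω - P[X])) P :=
    (integrable_const a).add ((hcentered.integrable one_le_two).const_mul b)
  have hsq : Integrable (fun ω => c * (X ω - P[X]) ^ 2) P := hcentered.integrable_sq.const_mul c
  calc P[Y] ≤ ∫ ω, a + b * (X ω - P[X]) + c * (X ω - P[X]) ^ 2 ∂P :=
        integral_mono (f := Y) hY (hlin.add hsq) hYX
    _ = a + c * variance X P := by
      rw [integral_add hlin hsq, integral_add (integrable_const a)
        ((hcentered.integrable one_le_two).const_mul b), integral_const_mul, integral_const_mul,
        integral_sub (hX.integrable one_le_two) (integrable_const _),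
        variance_eq_integral hX.aestronglyMeasurable.aemeasurable]
      simp

end Probability

/-- the error J̃ = E[e^{−X}] − e^{−μ}(1 + σ²/2) of the
variance-corrected approximation satisfies
−(1/2)e^{−μ}σ² ≤ J̃ ≤ σ²(1 − e^{−μ} − μe^{−μ} − (1/2)μ²e^{−μ})/μ². -/
theorem stmt_3 {Ω : Type*} [MeasurableSpace Ω] (P : Measure Ω) [IsProbabilityMeasure P]
    (X : Ω → ℝ) (hXnn : ∀ ω, 0 ≤ X ω)
    (hX1 : Integrable X P) (hX2 : Integrable (fun ω => X ω ^ 2) P)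
    (hmean : 0 < ∫ ω, X ω ∂P) :
    -((1/2) * Real.exp (-(∫ ω, X ω ∂P)) * variance X P) ≤
        (∫ ω, Real.exp (-X ω) ∂P) -
          Real.exp (-(∫ ω, X ω ∂P)) * (1 + variance X P / 2) ∧
      (∫ ω, Real.exp (-X ω) ∂P) -
          Real.exp (-(∫ ω, X ω ∂P)) * (1 + variance X P / 2) ≤
        variance X P *
          (1 - Real.exp (-(∫ ω, X ω ∂P)) -
            (∫ ω, X ω ∂P) * Real.exp (-(∫ ω, X ω ∂P)) -
            (1/2) * (∫ ω, X ω ∂P)^2 * Real.exp (-(∫ ω, X ω ∂P))) /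
          (∫ ω, X ω ∂P)^2 := by
  set m := ∫ ω, X ω ∂P
  have hX : MemLp X 2 P := (memLp_two_iff_integrable_sq hX1.aestronglyMeasurable).2 hX2
  have hexpX : Integrable (fun ω => exp (-X ω)) P := by
    refine .of_bound hX1.aemeasurable.neg.exp.aestronglyMeasurable 1
      (.of_forall fun ω => ?_)
    rw [norm_of_nonneg (exp_pos _).le, exp_le_one_iff, neg_nonpos]
    exact hXnn ω
  have hlower : exp (-m) ≤ ∫ ω, exp (-X ω) ∂P :=
    (convexOn_exp.comp_linearMap (-LinearMap.id)).map_integral_le (by fun_prop) isClosed_univ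
      (by simp) hX1 hexpX
  set c := exp (-m) * ((exp m - 1 - m) / m ^ 2) with hc
  have hupper : ∫ ω, exp (-X ω) ∂P ≤ exp (-m) + c * variance X P :=
    integral_le_add_mul_variance hX hexpX fun ω => exp_neg_le_tangent_add_mul_sq hmean (hXnn ω)
  have hexp : exp (-m) * exp m = 1 := by rw [← exp_add, neg_add_cancel, exp_zero]
  refine ⟨by linarith, ?_⟩
  calc _ ≤ exp (-m) + c * variance X P - exp (-m) * (1 + variance X P / 2) := by linarith
    _ = _ := by rw [hc]; field_simp; linear_combination 2 * variance X P * hexp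
end

section
/- Fix a real number μ > 0 and define φ : [0, ∞) → ℝ by φ(x) = (e^{−x} − e^{−μ} + (x − μ)e^{−μ})/(x − μ)² for x ≠ μ and φ(μ) = (1/2)e^{−μ}. Then φ is monotonically decreasing on [0, ∞): for all 0 ≤ x₁ ≤ x₂, φ(x₁) ≥ φ(x₂). -/
/-!
Taylor's formula with integral remainder, applied to `e^{-x}` at `μ`, gives
`e^{-x} - e^{-μ} + (x - μ) e^{-μ} = (x - μ)² e^{-μ} ∫₀¹ (1 - s) e^{-s (x - μ)} ds`,
so `φ x = e^{-μ} ∫₀¹ (1 - s) e^{-s (x - μ)} ds` for every `x`, including `x = μ`.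
The integrand is nonincreasing in `x`, hence so is `φ`.
-/

open Real intervalIntegral

noncomputable def expNegTaylorKernel (t : ℝ) : ℝ := ∫ s in (0 : ℝ)..1, (1 - s) * exp (-(s * t))

namespace expNegTaylorKernel

theorem continuous_integrand (t : ℝ) : Continuous fun s : ℝ => (1 - s) * exp (-(s * t)) := by
  fun_prop

theorem antitone : Antitone expNegTaylorKernel := by
  intro t₁ t₂ h
  refine integral_mono_on zero_le_one ((continuous_integrand t₂).intervalIntegrable _ _)
    ((continuous_integrand t₁).intervalIntegrable _ _) fun s hs => ?_
  gcongr
  · linarith [hs.2]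
  · nlinarith [hs.1]

theorem apply_zero : expNegTaylorKernel 0 = 1 / 2 := by
  simp only [expNegTaylorKernel, mul_zero, neg_zero, exp_zero, mul_one]
  rw [integral_sub intervalIntegrable_const intervalIntegrable_id, integral_const, integral_id]
  norm_num

theorem apply_of_ne_zero {t : ℝ} (ht : t ≠ 0) :
    expNegTaylorKernel t = (exp (-t) - 1 + t) / t ^ 2 := by
  have hprimitive : ∀ s ∈ Set.uIcc (0 : ℝ) 1,
      HasDerivAt (fun s => (s / t + (1 - t) / t ^ 2) * exp (-(s * t)))
        ((1 - s) * exp (-(s * t))) s := by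
    intro s _
    have hlin : HasDerivAt (fun s : ℝ => s / t + (1 - t) / t ^ 2) (1 / t) s := by
      simpa using ((hasDerivAt_id s).div_const t).add_const ((1 - t) / t ^ 2)
    have hexp : HasDerivAt (fun s : ℝ => exp (-(s * t))) (exp (-(s * t)) * -t) s := by
      simpa using ((hasDerivAt_id s).mul_const t).fun_neg.exp
    refine (hlin.fun_mul hexp).congr_deriv ?_
    field_simp
    ring
  rw [expNegTaylorKernel, integral_eq_sub_of_hasDerivAt hprimitive
    ((continuous_integrand t).intervalIntegrable _ _)]
  field_simp
  simp only [mul_zero, neg_zero, exp_zero]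
  ring

end expNegTaylorKernel

theorem stmt_6_general (μ : ℝ)
    (φ : ℝ → ℝ)
    (hφ : ∀ x, φ x = if x = μ then (1/2) * Real.exp (-μ)
      else (Real.exp (-x) - Real.exp (-μ) + (x - μ) * Real.exp (-μ)) / (x - μ)^2) :
    ∀ x₁ x₂ : ℝ, 0 ≤ x₁ → x₁ ≤ x₂ → φ x₂ ≤ φ x₁ := by
  have hφ_kernel : ∀ x, φ x = exp (-μ) * expNegTaylorKernel (x - μ) := by
    intro x
    rw [hφ]
    split_ifs with hx
    · rw [hx, sub_self, expNegTaylorKernel.apply_zero]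
      ring
    · rw [expNegTaylorKernel.apply_of_ne_zero (sub_ne_zero.mpr hx),
        show -x = -(x - μ) + -μ by ring, exp_add]
      field_simp
  intro x₁ x₂ _ h
  rw [hφ_kernel, hφ_kernel]
  exact mul_le_mul_of_nonneg_left (expNegTaylorKernel.antitone (sub_le_sub_right h μ)) (exp_pos _).le

/-- the continuously-extended divided-difference quotient φ is
monotonically decreasing on [0, ∞). -/
theorem stmt_6 (μ : ℝ) (hμ : 0 < μ)
    (φ : ℝ → ℝ)
    (hφ : ∀ x, φ x = if x = μ then (1/2) * Real.exp (-μ)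
      else (Real.exp (-x) - Real.exp (-μ) + (x - μ) * Real.exp (-μ)) / (x - μ)^2) :
    ∀ x₁ x₂ : ℝ, 0 ≤ x₁ → x₁ ≤ x₂ → φ x₂ ≤ φ x₁ :=
  stmt_6_general μ φ hφ
end

section
/- Fix a real number μ > 0 and define φ : [0, ∞) → ℝ by φ(x) = (e^{−x} − e^{−μ} + (x − μ)e^{−μ})/(x − μ)² for x ≠ μ and φ(μ) = (1/2)e^{−μ}. Then the supremum of φ over [0, ∞) is attained at x = 0 and equals (1 − e^{−μ} − μe^{−μ})/μ². -/
/-!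
By Taylor's formula with integral remainder, `(e^{-t} - 1 + t) / t² = ∫₀¹ (1 - u) e^{-tu} du`,
and the right-hand side is `1/2` at `t = 0`. Since `e^{-x} = e^{-μ} e^{-(x - μ)}`, this gives
`φ x = e^{-μ} ∫₀¹ (1 - u) e^{-(x - μ) u} du`, which is antitone in `x` because the integrand is.
So on `[0, ∞)` the maximum of `φ` is at `x = 0`.
-/

open Real intervalIntegral

noncomputable def expNegDivDiff (t : ℝ) : ℝ := ∫ u in (0 : ℝ)..1, (1 - u) * exp (-(t * u))

lemma intervalIntegrable_expNegDivDiff_integrand (t a b : ℝ) :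
    IntervalIntegrable (fun u => (1 - u) * exp (-(t * u))) MeasureTheory.volume a b :=
  (by fun_prop : Continuous fun u => (1 - u) * exp (-(t * u))).intervalIntegrable a b

lemma expNegDivDiff_of_ne_zero {t : ℝ} (ht : t ≠ 0) :
    expNegDivDiff t = (exp (-t) - 1 + t) / t ^ 2 := by
  have hderiv : ∀ u ∈ Set.uIcc (0 : ℝ) 1,
      HasDerivAt (fun u => ((1 - t) / t ^ 2 + u / t) * exp (-(t * u)))
        ((1 - u) * exp (-(t * u))) u := by
    intro u _
    have hlin : HasDerivAt (fun u => (1 - t) / t ^ 2 + u / t) (1 / t) u := by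
      simpa using ((hasDerivAt_id u).div_const t).const_add ((1 - t) / t ^ 2)
    have hexp : HasDerivAt (fun u => exp (-(t * u))) (exp (-(t * u)) * -t) u :=
      (((hasDerivAt_id u).const_mul t).neg.congr_deriv (by ring)).exp
    refine (hlin.mul hexp).congr_deriv ?_
    field_simp
    ring
  rw [expNegDivDiff, integral_eq_sub_of_hasDerivAt hderiv
    (intervalIntegrable_expNegDivDiff_integrand t 0 1)]
  field_simp
  simp only [mul_zero, mul_one, neg_zero, exp_zero]
  ring

lemma expNegDivDiff_zero : expNegDivDiff 0 = 1 / 2 := by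
  simp only [expNegDivDiff, zero_mul, neg_zero, exp_zero, mul_one]
  rw [integral_sub intervalIntegrable_const intervalIntegral.intervalIntegrable_id]
  norm_num

lemma expNegDivDiff_antitone : Antitone expNegDivDiff := by
  intro s t hst
  refine integral_mono_on zero_le_one (intervalIntegrable_expNegDivDiff_integrand t 0 1)
    (intervalIntegrable_expNegDivDiff_integrand s 0 1) fun u hu => ?_
  have hexp : exp (-(t * u)) ≤ exp (-(s * u)) := exp_le_exp.2 (by nlinarith [hu.1])
  exact mul_le_mul_of_nonneg_left hexp (by linarith [hu.2])

lemma eq_exp_mul_expNegDivDiff_sub {μ : ℝ} {φ : ℝ → ℝ}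
    (hφ : ∀ x, φ x = if x = μ then (1/2) * exp (-μ)
      else (exp (-x) - exp (-μ) + (x - μ) * exp (-μ)) / (x - μ)^2) (x : ℝ) :
    φ x = exp (-μ) * expNegDivDiff (x - μ) := by
  rw [hφ x]
  split_ifs with hx
  · rw [hx, sub_self, expNegDivDiff_zero]
    ring
  · have hxμ : x - μ ≠ 0 := sub_ne_zero.2 hx
    rw [expNegDivDiff_of_ne_zero hxμ, show -x = -(x - μ) + -μ by ring, exp_add]
    field_simp

/-- the supremum of φ over [0, ∞) is attained at x = 0 and equals
(1 − e^{−μ} − μe^{−μ})/μ². -/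
theorem stmt_7 (μ : ℝ) (hμ : 0 < μ)
    (φ : ℝ → ℝ)
    (hφ : ∀ x, φ x = if x = μ then (1/2) * Real.exp (-μ)
      else (Real.exp (-x) - Real.exp (-μ) + (x - μ) * Real.exp (-μ)) / (x - μ)^2) :
    φ 0 = (1 - Real.exp (-μ) - μ * Real.exp (-μ)) / μ^2 ∧
      IsGreatest (φ '' Set.Ici 0) ((1 - Real.exp (-μ) - μ * Real.exp (-μ)) / μ^2) := by
  have hφ0 : φ 0 = (1 - exp (-μ) - μ * exp (-μ)) / μ ^ 2 := by
    rw [hφ 0, if_neg hμ.ne, neg_zero, exp_zero]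
    ring
  refine ⟨hφ0, ⟨0, Set.self_mem_Ici, hφ0⟩, ?_⟩
  rintro _ ⟨x, hx, rfl⟩
  rw [← hφ0, eq_exp_mul_expNegDivDiff_sub hφ, eq_exp_mul_expNegDivDiff_sub hφ]
  exact mul_le_mul_of_nonneg_left (expNegDivDiff_antitone (by linarith [Set.mem_Ici.1 hx]))
    (exp_pos _).le
end
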